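/- arXiv:2505.10809 — 4 statements merged into one kernel-verified Lean document; each statement's English description precedes it below -/
import Mathlib

section
/- Let C be a small pointed category admitting finite limits and finite colimits, and let n ≥ 0 be an integer. Then the following conditions are equivalent: (1) every object X of C is n-excisive, i.e. for every object X the corepresentable functor Hom_C(X, −) : C ⥤ Type is n-excisive; (2) the identity functor of C is n-excisive; (3) the Yoneda embedding C ⥤ Fun(C^op, Type) is n-excisive. -/
open CategoryTheory CategoryTheory.Limits

universe v u v' u'

variable {σ : Type} {C : Type u} [Category.{v} C]

/-- The canonical cone with vertex `X ∅` over the restriction of the `S`-cube `X`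
to the poset of nonempty subsets of `S`. -/
def cartesianCone (X : Finset σ ⥤ C) :
    Cone (ObjectProperty.ι (fun T : Finset σ => T.Nonempty) ⋙ X) where
  pt := X.obj ∅
  π :=
    { app := fun T => X.map (homOfLE (Finset.empty_subset T.obj))
      naturality := fun T T' f => by
        dsimp
        rw [Category.id_comp, ← X.map_comp]
        rfl }

/-- An `S`-cube is Cartesian if the canonical cone with vertex `X ∅` over its restriction
to nonempty subsets is a limit cone. -/
def IsCartesianCube (X : Finset σ ⥤ C) : Prop :=
  Nonempty (IsLimit (cartesianCone X))

/-- The canonical cocone with vertex `X T` over the restriction of the `S`-cube `X`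
to the poset of subsets of `T` having at most one element. -/
def cubeCocone (X : Finset σ ⥤ C) (T : Finset σ) :
    Cocone (ObjectProperty.ι
      (fun T' : Finset σ => T'.card ≤ 1 ∧ T' ⊆ T) ⋙ X) where
  pt := X.obj T
  ι :=
    { app := fun T' => X.map (homOfLE T'.property.2)
      naturality := fun T' T'' f => by
        dsimp
        rw [Category.comp_id, ← X.map_comp]
        rfl }

/-- An `S`-cube `X` is strongly coCartesian if it is a pointwise left Kan extension of its
restriction to the poset `P_{≤1}(S)` of subsets having at most one element: i.e. for every
`T ⊆ S`, the canonical cocone with vertex `X T` over the restriction of `X` to subsets of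
`T` with at most one element is a colimit cocone. -/
def IsStronglyCoCartesian (X : Finset σ ⥤ C) : Prop :=
  ∀ T : Finset σ, Nonempty (IsColimit (cubeCocone X T))

/-- A functor `F : C ⥤ D` is `n`-excisive if for every finite set `S` with exactly `n + 1`
elements, `F` sends strongly coCartesian `S`-cubes of `C` to Cartesian `S`-cubes of `D`. -/
def IsExcisive {D : Type u'} [Category.{v'} D] (n : ℕ) (F : C ⥤ D) : Prop :=
  ∀ (σ : Type) [Fintype σ], Fintype.card σ = n + 1 →
    ∀ X : Finset σ ⥤ C, IsStronglyCoCartesian X → IsCartesianCube (X ⋙ F)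

/-!
Being Cartesian is a limit condition. Limits in `C` are detected jointly by the corepresentable
functors `Hom(W, -)`, limits of presheaves are detected pointwise, and evaluating the Yoneda
embedding at `W` gives `Hom(W, -)` again. So each of the three conditions says that
`Hom(W, X)` is Cartesian for every object `W` and every strongly coCartesian cube `X`.
-/

section

variable {D : Type u'} [Category.{v'} D]

noncomputable def cartesianConeCompIso (F : C ⥤ D) (X : Finset σ ⥤ C) :
    cartesianCone (X ⋙ F) ≅ F.mapCone (cartesianCone X) :=
  Cone.ext (Iso.refl _) (fun T => by simp [cartesianCone])

lemma isCartesianCube_comp_iff (F : C ⥤ D) (X : Finset σ ⥤ C) :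
    IsCartesianCube (X ⋙ F) ↔ Nonempty (IsLimit (F.mapCone (cartesianCone X))) :=
  (IsLimit.equivIsoLimit (cartesianConeCompIso F X)).nonempty_congr

lemma isCartesianCube_iff_forall_coyoneda (X : Finset σ ⥤ C) :
    IsCartesianCube X ↔ ∀ W : C, IsCartesianCube (X ⋙ coyoneda.obj (Opposite.op W)) := by
  simp only [isCartesianCube_comp_iff]
  constructor
  · rintro ⟨h⟩ W
    exact ⟨isLimitOfPreserves _ h⟩
  · intro h
    exact ⟨coyonedaJointlyReflectsLimits _ _ fun W => (h W.unop).some⟩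

lemma isCartesianCube_iff_forall_evaluation {J : Type*} [Category J]
    (X : Finset σ ⥤ J ⥤ Type*) :
    IsCartesianCube X ↔ ∀ j : J, IsCartesianCube (X ⋙ (evaluation J _).obj j) := by
  simp only [isCartesianCube_comp_iff]
  constructor
  · rintro ⟨h⟩ j
    exact ⟨isLimitOfPreserves _ h⟩
  · intro h
    exact ⟨evaluationJointlyReflectsLimits _ fun j => (h j).some⟩

lemma isCartesianCube_comp_yoneda_iff (X : Finset σ ⥤ C) :
    IsCartesianCube (X ⋙ yoneda) ↔
      ∀ W : C, IsCartesianCube (X ⋙ coyoneda.obj (Opposite.op W)) :=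
  (isCartesianCube_iff_forall_evaluation (X ⋙ yoneda)).trans
    (Opposite.op_surjective.forall.trans Iff.rfl)

lemma isExcisive_iff_forall_of_isCartesianCube_comp_iff {E : Type*} [Category E] {ι : Type*}
    (n : ℕ) (F : C ⥤ D) (G : ι → C ⥤ E)
    (h : ∀ (τ : Type) (X : Finset τ ⥤ C),
      IsCartesianCube (X ⋙ F) ↔ ∀ i, IsCartesianCube (X ⋙ G i)) :
    IsExcisive n F ↔ ∀ i, IsExcisive n (G i) :=
  ⟨fun hF i τ _ hτ X hX => (h τ X).1 (hF τ hτ X hX) i,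
    fun hG τ _ hτ X hX => (h τ X).2 fun i => hG i τ hτ X hX⟩

end

lemma isExcisive_id_iff_forall_coyoneda (n : ℕ) :
    IsExcisive n (𝟭 C) ↔ ∀ W : C, IsExcisive n (coyoneda.obj (Opposite.op W)) :=
  isExcisive_iff_forall_of_isCartesianCube_comp_iff n _ _ fun _ X =>
    isCartesianCube_iff_forall_coyoneda X

lemma isExcisive_yoneda_iff_forall_coyoneda (n : ℕ) :
    IsExcisive n (yoneda : C ⥤ Cᵒᵖ ⥤ Type v) ↔
      ∀ W : C, IsExcisive n (coyoneda.obj (Opposite.op W)) :=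
  isExcisive_iff_forall_of_isCartesianCube_comp_iff n _ _ fun _ X =>
    isCartesianCube_comp_yoneda_iff X

theorem excisive_tfae_general (C : Type u) [SmallCategory C] (n : ℕ) :
    List.TFAE
      [∀ X : C, IsExcisive n (coyoneda.obj (Opposite.op X)),
        IsExcisive n (𝟭 C),
        IsExcisive n (yoneda : C ⥤ Cᵒᵖ ⥤ Type u)] := by
  tfae_have 2 ↔ 1 := isExcisive_id_iff_forall_coyoneda n
  tfae_have 3 ↔ 1 := isExcisive_yoneda_iff_forall_coyoneda n
  tfae_finish

/-- For a small pointed category `C` with finite limits and finite colimits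
and `n ≥ 0`, the following are equivalent: (1) every object of `C` is `n`-excisive, i.e. every
corepresentable functor `Hom_C(X, -) : C ⥤ Type` is `n`-excisive; (2) the identity functor of
`C` is `n`-excisive; (3) the Yoneda embedding `C ⥤ Fun(Cᵒᵖ, Type)` is `n`-excisive. -/
theorem excisive_tfae (C : Type u) [SmallCategory C] [HasZeroObject C]
    [HasFiniteLimits C] [HasFiniteColimits C] (n : ℕ) :
    List.TFAE
      [∀ X : C, IsExcisive n (coyoneda.obj (Opposite.op X)),
        IsExcisive n (𝟭 C),
        IsExcisive n (yoneda : C ⥤ Cᵒᵖ ⥤ Type u)] :=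
  excisive_tfae_general C n
end

section
/- Let C be a category with finite colimits, S a finite set, and X : P(S) ⥤ C a strongly coCartesian S-cube. For a subset I ⊆ S, let X_I : P(S) ⥤ C be the S-cube defined by X_I(T) = X(I ∪ T), with structure maps induced by inclusions of subsets. Then X_I is a strongly coCartesian S-cube. -/
open CategoryTheory CategoryTheory.Limits

universe v u v' u'

variable {σ : Type} {C : Type u} [Category.{v} C]

/-- For `I ⊆ S`, the monotone map `T ↦ I ∪ T` on subsets of `S`. -/
def unionLeftMonotone [DecidableEq σ] (I : Finset σ) :
    Monotone (fun T : Finset σ => I ∪ T) :=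
  fun _ _ h => Finset.union_subset_union (Finset.Subset.refl I) h

/-!
A cocone over `T' ↦ X (I ∪ T')` (with `T' ⊆ T`, `|T'| ≤ 1`) induces one over `U ↦ X U` (with
`U ⊆ I ∪ T`, `|U| ≤ 1`): send `U` to the leg at `U \ I`, precomposed with `X U ⟶ X (I ∪ (U \ I))`.
As `X` is strongly coCartesian at `I ∪ T`, this produces the only candidate map out of
`X (I ∪ T)`. It restricts to the given leg at `T'` because `X` is also strongly coCartesian at
`I ∪ T'`, so the two maps out of `X (I ∪ T')` can be compared on the `U ⊆ I ∪ T'` with `|U| ≤ 1`,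
where they agree by construction.
-/

namespace CategoryTheory

lemma Functor.map_comp_map_eq_map {P : Type*} [Preorder P] (F : P ⥤ C) {a b c : P}
    (f : a ⟶ b) (g : b ⟶ c) (h : a ⟶ c) : F.map f ≫ F.map g = F.map h := by
  rw [← F.map_comp]
  rfl

namespace Limits

variable {J K : Type*} [Category J] [Category K] {F : J ⥤ C} {G : K ⥤ C}

def IsColimit.ofPrecomposeWhisker (s : Cocone F) (φ : K ⥤ J) (α : G ⟶ φ ⋙ F)
    (h : IsColimit ((Cocone.precompose α).obj (s.whisker φ)))
    (legs : ∀ (c : Cocone F) (f : s.pt ⟶ c.pt),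
      (∀ k, α.app k ≫ s.ι.app (φ.obj k) ≫ f = α.app k ≫ c.ι.app (φ.obj k)) →
        ∀ j, s.ι.app j ≫ f = c.ι.app j) :
    IsColimit s where
  desc c := h.desc ((Cocone.precompose α).obj (c.whisker φ))
  fac c := legs c _ fun k => by simpa using h.fac ((Cocone.precompose α).obj (c.whisker φ)) k
  uniq c m hm := h.hom_ext fun k => by
    simpa [hm] using (h.fac ((Cocone.precompose α).obj (c.whisker φ)) k).symm

end Limits

end CategoryTheory

abbrev AtMostOneSubset (T : Finset σ) :=
  ObjectProperty.FullSubcategory (fun U : Finset σ => U.card ≤ 1 ∧ U ⊆ T)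

lemma IsStronglyCoCartesian.hom_ext {X : Finset σ ⥤ C} (hX : IsStronglyCoCartesian X)
    {T : Finset σ} {Y : C} {g₁ g₂ : X.obj T ⟶ Y}
    (h : ∀ (U : Finset σ) (hU : U ⊆ T), U.card ≤ 1 →
      X.map (homOfLE hU) ≫ g₁ = X.map (homOfLE hU) ≫ g₂) :
    g₁ = g₂ :=
  (hX T).some.hom_ext fun U => h U.obj U.property.2 U.property.1

section

variable [DecidableEq σ] (X : Finset σ ⥤ C) (I T : Finset σ)

def sdiffAtMostOneSubset : AtMostOneSubset (I ∪ T) ⥤ AtMostOneSubset T where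
  obj U := ⟨U.obj \ I, (Finset.card_le_card Finset.sdiff_subset).trans U.property.1,
    sdiff_le_iff.mpr U.property.2⟩
  map f := ObjectProperty.homMk (homOfLE (Finset.sdiff_subset_sdiff (leOfHom f.hom) le_rfl))

def toUnionSdiff :
    ObjectProperty.ι _ ⋙ X ⟶
      sdiffAtMostOneSubset I T ⋙ ObjectProperty.ι _ ⋙ (unionLeftMonotone I).functor ⋙ X where
  app _ := X.map (homOfLE le_sup_sdiff)
  naturality _ _ f :=
    (X.map_comp_map_eq_map _ _ (homOfLE ((leOfHom f.hom).trans le_sup_sdiff))).trans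
      (X.map_comp_map_eq_map _ _ _).symm

noncomputable def isColimitPrecomposeToUnionSdiff (h : IsColimit (cubeCocone X (I ∪ T))) :
    IsColimit ((Cocone.precompose (toUnionSdiff X I T)).obj
      ((cubeCocone ((unionLeftMonotone I).functor ⋙ X) T).whisker (sdiffAtMostOneSubset I T))) :=
  h.ofIsoColimit (Cocone.ext (Iso.refl _) fun _ =>
    (Category.comp_id _).trans (X.map_comp_map_eq_map _ _ _).symm)

variable {X} in
lemma cubeCocone_unionLeft_ι_comp_eq (hX : IsStronglyCoCartesian X)
    (c : Cocone (ObjectProperty.ι _ ⋙ (unionLeftMonotone I).functor ⋙ X))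
    (f : X.obj (I ∪ T) ⟶ c.pt)
    (hf : ∀ U, (toUnionSdiff X I T).app U ≫
      (cubeCocone ((unionLeftMonotone I).functor ⋙ X) T).ι.app ((sdiffAtMostOneSubset I T).obj U) ≫ f =
        (toUnionSdiff X I T).app U ≫ c.ι.app ((sdiffAtMostOneSubset I T).obj U))
    (T' : AtMostOneSubset T) :
    (cubeCocone ((unionLeftMonotone I).functor ⋙ X) T).ι.app T' ≫ f = c.ι.app T' := by
  refine hX.hom_ext fun U hU hU1 => ?_
  have hUT : U ⊆ I ∪ T := hU.trans (Finset.union_subset_union le_rfl T'.property.2)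
  let U' : AtMostOneSubset (I ∪ T) := ⟨U, hU1, hUT⟩
  let g : (sdiffAtMostOneSubset I T).obj U' ⟶ T' :=
    ObjectProperty.homMk (homOfLE (sdiff_le_iff.mpr hU))
  have e1 : X.map (homOfLE hU) ≫ (cubeCocone ((unionLeftMonotone I).functor ⋙ X) T).ι.app T' =
      (toUnionSdiff X I T).app U' ≫
        (cubeCocone ((unionLeftMonotone I).functor ⋙ X) T).ι.app ((sdiffAtMostOneSubset I T).obj U') :=
    (X.map_comp_map_eq_map _ _ (homOfLE hUT)).trans (X.map_comp_map_eq_map _ _ _).symm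
  have e2 : X.map (homOfLE hU) =
      (toUnionSdiff X I T).app U' ≫ ((unionLeftMonotone I).functor ⋙ X).map g.hom :=
    (X.map_comp_map_eq_map _ _ _).symm
  calc X.map (homOfLE hU) ≫ (cubeCocone ((unionLeftMonotone I).functor ⋙ X) T).ι.app T' ≫ f
      = (toUnionSdiff X I T).app U' ≫ (cubeCocone ((unionLeftMonotone I).functor ⋙ X) T).ι.app
          ((sdiffAtMostOneSubset I T).obj U') ≫ f :=
        (Category.assoc _ _ _).symm.trans ((e1 =≫ f).trans (Category.assoc _ _ _))
    _ = (toUnionSdiff X I T).app U' ≫ c.ι.app ((sdiffAtMostOneSubset I T).obj U') := hf U'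
    _ = X.map (homOfLE hU) ≫ c.ι.app T' :=
        (_ ≫= c.w g).symm.trans ((Category.assoc _ _ _).symm.trans (e2 =≫ c.ι.app T').symm)

end

theorem stronglyCoCartesian_union_general {σ : Type} [DecidableEq σ]
    {C : Type u} [Category.{v} C]
    (X : Finset σ ⥤ C) (hX : IsStronglyCoCartesian X) (I : Finset σ) :
    IsStronglyCoCartesian ((unionLeftMonotone I).functor ⋙ X) := fun T =>
  ⟨IsColimit.ofPrecomposeWhisker _ (sdiffAtMostOneSubset I T) (toUnionSdiff X I T)
    (isColimitPrecomposeToUnionSdiff X I T (hX (I ∪ T)).some)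
    (cubeCocone_unionLeft_ι_comp_eq I T hX)⟩

/-- Let `C` be a category with finite colimits, `S` a finite set, and
`X : P(S) ⥤ C` a strongly coCartesian `S`-cube. For `I ⊆ S`, the `S`-cube
`X_I : T ↦ X (I ∪ T)` is again strongly coCartesian. -/
theorem stronglyCoCartesian_union {σ : Type} [Fintype σ] [DecidableEq σ]
    {C : Type u} [Category.{v} C] [HasFiniteColimits C]
    (X : Finset σ ⥤ C) (hX : IsStronglyCoCartesian X) (I : Finset σ) :
    IsStronglyCoCartesian ((unionLeftMonotone I).functor ⋙ X) :=
  stronglyCoCartesian_union_general X hX I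
end

section
/- Let S be a finite set and S' ⊆ S a nonempty subset. Let P_{≠∅}(S) denote the poset of nonempty subsets of S and P_{S'}(S) the poset of subsets of S containing S', both ordered by inclusion and regarded as categories. Then the monotone map P_{≠∅}(S) → P_{S'}(S) given by I ↦ I ∪ S' is an initial (limit-cofinal) functor. Consequently, for every category D with finite limits and every functor G : P_{S'}(S) ⥤ D, the canonical map G(S') → lim_{∅ ≠ I ⊆ S} G(I ∪ S') is an isomorphism. -/
/-!
For `T ⊇ S'`, the nonempty `I` with `I ∪ S' ⊆ T` are exactly the nonempty subsets of `T`.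
They include `S'` and are closed under union, so the comma
category of `I ↦ I ∪ S'` over `T` is nonempty and connected, i.e. the functor is initial.
Restricting along an initial functor does not change limits, and the limit of `G` is `G S'`
because `S'` is the least element of `P_{S'}(S)`.
-/

open CategoryTheory CategoryTheory.Limits

universe v u

variable {σ : Type} [DecidableEq σ]

/-- For a subset `S' ⊆ S`, the monotone map `I ↦ I ∪ S'` from the poset `P_{≠∅}(S)` of
nonempty subsets of `S` to the poset `P_{S'}(S)` of subsets of `S` containing `S'`. -/
def unionWithMonotone (S' : Finset σ) :
    Monotone (fun I : {I : Finset σ // I.Nonempty} =>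
      (⟨I.1 ∪ S', Finset.subset_union_right⟩ : {T : Finset σ // S' ⊆ T})) :=
  fun _ _ h => Finset.union_subset_union h (Finset.Subset.refl S')

/-- The canonical cone with vertex `G S'` over the diagram `I ↦ G (I ∪ S')` indexed by the
poset of nonempty subsets of `S`; its legs are induced by the inclusions `S' ⊆ I ∪ S'`. -/
def canonicalUnionCone (S' : Finset σ) {D : Type u} [Category.{v} D]
    (G : {T : Finset σ // S' ⊆ T} ⥤ D) :
    Cone ((unionWithMonotone S').functor ⋙ G) where
  pt := G.obj ⟨S', Finset.Subset.refl S'⟩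
  π :=
    { app := fun I => G.map (homOfLE (Subtype.mk_le_mk.mpr Finset.subset_union_right))
      naturality := fun I I' f => by
        dsimp
        rw [Category.id_comp]
        first
          | (erw [← G.map_comp]; rfl)
          | exact (G.map_comp _ _).symm }

lemma Monotone.initial_functor_of_directedOn {J₁ J₂ : Type*} [Preorder J₁] [Preorder J₂]
    {f : J₁ → J₂} (hf : Monotone f) (hne : ∀ j₂, ∃ j₁, f j₁ ≤ j₂)
    (hdir : ∀ j₂, DirectedOn (· ≤ ·) (f ⁻¹' Set.Iic j₂)) :
    hf.functor.Initial where
  out j₂ := by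
    have : Nonempty (CostructuredArrow hf.functor j₂) :=
      let ⟨j₁, h⟩ := hne j₂
      ⟨CostructuredArrow.mk (Y := j₁) (homOfLE h)⟩
    refine zigzag_isConnected fun a b => ?_
    obtain ⟨c, hc, hac, hbc⟩ := hdir j₂ a.left (leOfHom a.hom) b.left (leOfHom b.hom)
    let γ : CostructuredArrow hf.functor j₂ := CostructuredArrow.mk (Y := c) (homOfLE hc)
    have toγ (x : CostructuredArrow hf.functor j₂) (hx : x.left ≤ c) : x ⟶ γ :=
      CostructuredArrow.homMk (homOfLE hx) (Subsingleton.elim _ _)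
    exact (Zigzag.of_hom (toγ a hac)).trans (Zigzag.of_inv (toγ b hbc))

def IsBot.isInitial {α : Type*} [Preorder α] {x : α} (h : IsBot x) : IsInitial x :=
  IsInitial.ofUniqueHom (fun y => homOfLE (h y)) (fun _ _ => Subsingleton.elim _ _)

lemma directedOn_unionWith_preimage_Iic (S' : Finset σ) (T : {T : Finset σ // S' ⊆ T}) :
    DirectedOn (· ≤ ·) ((fun I : {I : Finset σ // I.Nonempty} =>
      (⟨I.1 ∪ S', Finset.subset_union_right⟩ : {T : Finset σ // S' ⊆ T})) ⁻¹' Set.Iic T) := by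
  rintro I (hI : I.1 ∪ S' ⊆ T.1) J (hJ : J.1 ∪ S' ⊆ T.1)
  refine ⟨⟨I.1 ∪ J.1, I.2.mono Finset.subset_union_left⟩, ?_, Finset.subset_union_left,
    Finset.subset_union_right⟩
  show I.1 ∪ J.1 ∪ S' ⊆ T.1
  rw [Finset.union_union_distrib_right]
  exact Finset.union_subset hI hJ

theorem unionWith_initial_general {σ : Type} [DecidableEq σ]
    (S' : Finset σ) (hS' : S'.Nonempty) :
    (unionWithMonotone S').functor.Initial ∧
    ∀ (D : Type u) [Category.{v} D] [HasFiniteLimits D]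
      (G : {T : Finset σ // S' ⊆ T} ⥤ D),
      Nonempty (IsLimit (canonicalUnionCone S' G)) := by
  have hInitial : (unionWithMonotone S').functor.Initial :=
    (unionWithMonotone S').initial_functor_of_directedOn
      (fun T => ⟨⟨S', hS'⟩, Finset.union_subset T.2 T.2⟩)
      (directedOn_unionWith_preimage_Iic S')
  refine ⟨hInitial, fun D _ _ G => ?_⟩
  let hbot : IsInitial (⟨S', subset_rfl⟩ : {T : Finset σ // S' ⊆ T}) :=
    IsBot.isInitial fun T => T.2
  have hlim := (Functor.Initial.isLimitWhiskerEquiv (unionWithMonotone S').functor _).symm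
    (limitOfDiagramInitial hbot G)
  exact ⟨hlim.ofIsoLimit (Cone.ext (Iso.refl _) fun _ =>
    (congrArg G.map (Subsingleton.elim _ _)).trans (Category.id_comp _).symm)⟩

/-- Let `S` be a finite set and `S' ⊆ S` nonempty. The monotone map
`P_{≠∅}(S) → P_{S'}(S)`, `I ↦ I ∪ S'`, is an initial (limit-cofinal) functor. Consequently,
for every category `D` with finite limits and every functor `G : P_{S'}(S) ⥤ D`, the
canonical map `G S' → lim_{∅ ≠ I ⊆ S} G (I ∪ S')` is an isomorphism, i.e. the canonical
cone with vertex `G S'` is a limit cone. -/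
theorem unionWith_initial {σ : Type} [Fintype σ] [DecidableEq σ]
    (S' : Finset σ) (hS' : S'.Nonempty) :
    (unionWithMonotone S').functor.Initial ∧
    ∀ (D : Type u) [Category.{v} D] [HasFiniteLimits D]
      (G : {T : Finset σ // S' ⊆ T} ⥤ D),
      Nonempty (IsLimit (canonicalUnionCone S' G)) :=
  unionWith_initial_general S' hS'
end

section
/- Let V be a commutative ring and 𝔪 an idempotent ideal of V (𝔪 · 𝔪 = 𝔪), and assume m̃ := 𝔪 ⊗_V 𝔪 is a flat V-module. Then for every V-module M, the V-linear map 𝔪 ⊗_V (m̃ ⊗_V M) → m̃ ⊗_V M induced by the inclusion 𝔪 ↪ V (i.e. x ⊗ n ↦ x • n) is bijective; that is, the V-module m̃ ⊗_V M is firm. -/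
/-!
If `m̃ = 𝔪 ⊗ 𝔪` is flat, tensoring the inclusion `𝔪 ↪ V` with `m̃` stays injective, so the
multiplication map `𝔪 ⊗ m̃ → m̃` is injective; it is onto because `𝔪 = 𝔪 · 𝔪` makes
`𝔪 ⊗ 𝔪 → 𝔪` onto and `- ⊗ 𝔪` is right exact. Thus `m̃` is firm, and firmness passes
from `N` to `N ⊗ M` since `𝔪 ⊗ (N ⊗ M) → N ⊗ M` is `(𝔪 ⊗ N → N) ⊗ M` up to associativity.
-/

open TensorProduct

universe u

/-- The canonical `V`-linear map `𝔪 ⊗[V] N → N` induced by the inclusion `𝔪 ↪ V`,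
sending `x ⊗ n` to `x • n`. A `V`-module `N` is *firm* when this map is bijective. -/
noncomputable def firmMap {V : Type u} [CommRing V] (𝔪 : Ideal V) (N : Type u)
    [AddCommGroup N] [Module V N] : (𝔪 ⊗[V] N) →ₗ[V] N :=
  TensorProduct.lift ((LinearMap.lsmul V N).comp 𝔪.subtype)

section Firm

variable {V : Type u} [CommRing V] (𝔪 : Ideal V)

lemma firmMap_eq_lid_comp_rTensor (N : Type u) [AddCommGroup N] [Module V N] :
    firmMap 𝔪 N = (TensorProduct.lid V N).toLinearMap ∘ₗ 𝔪.subtype.rTensor N := by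
  ext x n
  simp [firmMap]

lemma firmMap_injective_of_flat (N : Type u) [AddCommGroup N] [Module V N] [Module.Flat V N] :
    Function.Injective (firmMap 𝔪 N) := by
  rw [firmMap_eq_lid_comp_rTensor]
  exact (TensorProduct.lid V N).injective.comp
    (Module.Flat.rTensor_preserves_injective_linearMap _ 𝔪.injective_subtype)

lemma firmMap_self_surjective {𝔪 : Ideal V} (hidem : 𝔪 * 𝔪 = 𝔪) :
    Function.Surjective (firmMap 𝔪 𝔪) := by
  have hle : 𝔪 * 𝔪 ≤ (LinearMap.range (firmMap 𝔪 𝔪)).map 𝔪.subtype :=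
    Submodule.mul_le.2 fun x hx y hy =>
      ⟨⟨x * y, 𝔪.mul_mem_left x hy⟩, ⟨⟨x, hx⟩ ⊗ₜ ⟨y, hy⟩, rfl⟩, rfl⟩
  intro z
  obtain ⟨t, ht, hzt⟩ := hle (hidem.ge z.2)
  obtain rfl : t = z := Subtype.ext hzt
  exact ht

lemma firmMap_tensorProduct (N M : Type u) [AddCommGroup N] [Module V N]
    [AddCommGroup M] [Module V M] :
    firmMap 𝔪 (N ⊗[V] M) =
      (firmMap 𝔪 N).rTensor M ∘ₗ (TensorProduct.assoc V 𝔪 N M).symm.toLinearMap := by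
  ext x n m
  simp [firmMap, smul_tmul']

lemma firmMap_tensorProduct_surjective {N : Type u} [AddCommGroup N] [Module V N]
    (M : Type u) [AddCommGroup M] [Module V M] (h : Function.Surjective (firmMap 𝔪 N)) :
    Function.Surjective (firmMap 𝔪 (N ⊗[V] M)) := by
  rw [firmMap_tensorProduct]
  exact (LinearMap.rTensor_surjective M h).comp (TensorProduct.assoc V 𝔪 N M).symm.surjective

lemma firmMap_tensorProduct_bijective {N : Type u} [AddCommGroup N] [Module V N]
    (M : Type u) [AddCommGroup M] [Module V M] (h : Function.Bijective (firmMap 𝔪 N)) :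
    Function.Bijective (firmMap 𝔪 (N ⊗[V] M)) := by
  rw [firmMap_tensorProduct]
  exact (LinearEquiv.rTensor M (LinearEquiv.ofBijective _ h)).bijective.comp
    (TensorProduct.assoc V 𝔪 N M).symm.bijective

end Firm

/-- Let `V` be a commutative ring and `𝔪` an idempotent ideal
(`𝔪 * 𝔪 = 𝔪`) such that `m̃ := 𝔪 ⊗[V] 𝔪` is a flat `V`-module. Then for every `V`-module
`M`, the map `𝔪 ⊗[V] (m̃ ⊗[V] M) → m̃ ⊗[V] M` induced by the inclusion `𝔪 ↪ V`
(`x ⊗ n ↦ x • n`) is bijective; that is, the `V`-module `m̃ ⊗[V] M` is firm. -/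
theorem tensor_firm {V : Type u} [CommRing V] (𝔪 : Ideal V)
    (hidem : 𝔪 * 𝔪 = 𝔪) [Module.Flat V (𝔪 ⊗[V] 𝔪)]
    (M : Type u) [AddCommGroup M] [Module V M] :
    Function.Bijective (firmMap 𝔪 ((𝔪 ⊗[V] 𝔪) ⊗[V] M)) :=
  firmMap_tensorProduct_bijective 𝔪 M
    ⟨firmMap_injective_of_flat 𝔪 _, firmMap_tensorProduct_surjective 𝔪 𝔪
      (firmMap_self_surjective hidem)⟩
end
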